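/- arXiv:1706.04998 — 2 statements merged into one kernel-verified Lean document; each statement's English description precedes it below -/
import Mathlib

section
/- For all n ≥ 1, the effective resistances between the three corner words of the graph on W_n satisfy R_n(0ⁿ,1ⁿ) = R_n(1ⁿ,2ⁿ) = R_n(0ⁿ,2ⁿ) = (5/3)ⁿ − 1. -/
/-!
Every cell `f_w(K)` lies in the triangle spanned by the `f_w(p i)`, so two cells of level `n + 1`
whose words start with different letters `a ≠ b` meet only if the words are `a bⁿ` and `b aⁿ`
(at the midpoint of `p a` and `p b`): `W_{n+1}` is three copies of `W_n` joined by three edges.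
By the Dirichlet principle `R_n(a, b)⁻¹` is the current `(L h)(a)` of the harmonic function `h`
with `h(a) = 1`, `h(b) = 0`. Harmonic functions with corner values `x` are built recursively
over the three copies; their current at the corner `i` is `c_n (3 x_i - ∑ x)`, where
`c_0 = 1` and `c_{n+1} = 3 c_n / (5 + 3 c_n)`, i.e. `c_n = 2 / (3 ((5/3)^{n+1} - 1))`.
-/

open MeasureTheory Filter Set
open scoped ENNReal NNReal Classical

noncomputable section

namespace SG

/-- The three vertices `p₀ = (0,0)`, `p₁ = (1,0)`, `p₂ = (1/2, √3/2)` viewed in `ℂ`. -/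
def p : Fin 3 → ℂ := ![0, 1, 1/2 + (Real.sqrt 3 / 2) * Complex.I]

/-- The three contraction maps `fᵢ x = (x + pᵢ)/2`. -/
def f (i : Fin 3) (x : ℂ) : ℂ := (x + p i) / 2

/-- `K` is the Sierpinski gasket: the (unique) nonempty compact set with
`K = f₀(K) ∪ f₁(K) ∪ f₂(K)`. -/
def IsSG (K : Set ℂ) : Prop :=
  K.Nonempty ∧ IsCompact K ∧ K = f 0 '' K ∪ f 1 '' K ∪ f 2 '' K

/-- `α = log 3 / log 2`. -/
def alpha : ℝ := Real.log 3 / Real.log 2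

/-- `β* = log 5 / log 2`. -/
def betastar : ℝ := Real.log 5 / Real.log 2

/-- The normalized `α`-dimensional Hausdorff measure restricted to `K`. -/
def nu (K : Set ℂ) : Measure ℂ :=
  ((Measure.hausdorffMeasure alpha : Measure ℂ) K)⁻¹ •
    (Measure.hausdorffMeasure alpha : Measure ℂ).restrict K

/-- `f_w` for a finite word `w` over `{0,1,2}` (empty word gives the identity). -/
def fwl : List (Fin 3) → ℂ → ℂ
  | [] => id
  | i :: t => f i ∘ fwl t

/-- `f_w` for a word `w ∈ W_n = {0,1,2}ⁿ`. -/
def fw {n : ℕ} (w : Fin n → Fin 3) : ℂ → ℂ := fwl (List.ofFn w)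

/-- The cell `K_w = f_w(K)`. -/
def Kw (K : Set ℂ) {n : ℕ} (w : Fin n → Fin 3) : Set ℂ := fw w '' K

/-- Adjacency `w⁽¹⁾ ∼ₙ w⁽²⁾`: distinct words with intersecting cells. -/
def Adj (K : Set ℂ) {n : ℕ} (w1 w2 : Fin n → Fin 3) : Prop :=
  w1 ≠ w2 ∧ (Kw K w1 ∩ Kw K w2).Nonempty

/-- `Pₙu(w) = ∫_K u(f_w(x)) ν(dx)`. -/
def P (K : Set ℂ) {n : ℕ} (u : ℂ → ℝ) (w : Fin n → Fin 3) : ℝ :=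
  ∫ x, u (fw w x) ∂(nu K)

/-- `Aₙ(u)`: sum over unordered adjacent pairs in `W_n` of `(Pₙu(w⁽¹⁾) − Pₙu(w⁽²⁾))²`
(written as half the sum over ordered pairs). -/
def A (K : Set ℂ) (n : ℕ) (u : ℂ → ℝ) : ℝ :=
  (1/2) * ∑ w1 : Fin n → Fin 3, ∑ w2 : Fin n → Fin 3,
    if Adj K w1 w2 then (P K u w1 - P K u w2)^2 else 0

/-- The graph energy `Eₙ(u,u)` on `W_n` (half the sum over ordered adjacent pairs). -/
def En (K : Set ℂ) {n : ℕ} (u : (Fin n → Fin 3) → ℝ) : ℝ :=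
  (1/2) * ∑ w1 : Fin n → Fin 3, ∑ w2 : Fin n → Fin 3,
    if Adj K w1 w2 then (u w1 - u w2)^2 else 0

/-- The effective resistance `Rₙ(a,b)` between two words of `W_n`. -/
def Rn (K : Set ℂ) {n : ℕ} (a b : Fin n → Fin 3) : ℝ :=
  (sInf {e : ℝ | ∃ u : (Fin n → Fin 3) → ℝ, u a = 1 ∧ u b = 0 ∧ e = En K u})⁻¹


def baryCoord (k : Fin 3) (z : ℂ) : ℝ :=
  ![1 - z.re - z.im / √3, z.re - z.im / √3, 2 * z.im / √3] k

lemma baryCoord_p (k j : Fin 3) : baryCoord k (p j) = if k = j then 1 else 0 := by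
  have h3 : (√3 : ℝ) ≠ 0 := by positivity
  fin_cases k <;> fin_cases j <;> simp [baryCoord, p] <;> field_simp <;> norm_num

lemma sum_baryCoord (z : ℂ) : ∑ k, baryCoord k z = 1 := by
  simp [Fin.sum_univ_three, baryCoord]; ring

lemma baryCoord_add_div_two (k : Fin 3) (z w : ℂ) :
    baryCoord k ((z + w) / 2) = (baryCoord k z + baryCoord k w) / 2 := by
  fin_cases k <;> simp [baryCoord] <;> ring

lemma baryCoord_f (k a : Fin 3) (z : ℂ) :
    baryCoord k (f a z) = (baryCoord k z + if k = a then 1 else 0) / 2 := by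
  rw [f, baryCoord_add_div_two, baryCoord_p]

lemma eq_of_baryCoord_eq {z w : ℂ} (h : ∀ k, baryCoord k z = baryCoord k w) : z = w := by
  have h3 : (√3 : ℝ) ≠ 0 := by positivity
  have him : z.im = w.im := by
    have := h 2
    simp only [baryCoord, Matrix.cons_val] at this
    field_simp at this
    linarith
  have h1 := h 1
  simp only [baryCoord, Matrix.cons_val, him] at h1
  exact Complex.ext (by linarith) him

lemma p_injective : Function.Injective p := fun i j h => by
  simpa [baryCoord_p] using congrArg (baryCoord i) h

lemma f_injective (a : Fin 3) : Function.Injective (f a) := by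
  intro z w h
  simpa [f] using h

lemma f_p_self (a : Fin 3) : f a (p a) = p a := by
  rw [f]; ring

def triangle : Set ℂ := {z | ∀ k, 0 ≤ baryCoord k z}

lemma p_mem_triangle (j : Fin 3) : p j ∈ triangle := fun k => by
  rw [baryCoord_p]; split_ifs <;> norm_num

lemma f_mem_triangle (a : Fin 3) {z : ℂ} (hz : z ∈ triangle) : f a z ∈ triangle := fun k => by
  rw [baryCoord_f]
  have := hz k
  split_ifs <;> linarith

lemma eq_p_of_one_le_baryCoord {z : ℂ} (hz : z ∈ triangle) {a : Fin 3}
    (ha : 1 ≤ baryCoord a z) : z = p a := by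
  refine eq_of_baryCoord_eq fun k => ?_
  have hsum := sum_baryCoord z
  rw [Fin.sum_univ_three] at hsum
  have h0 := hz 0
  have h1 := hz 1
  have h2 := hz 2
  rw [baryCoord_p]
  fin_cases a <;> fin_cases k <;> simp at ha ⊢ <;> linarith

lemma eq_of_f_eq_f {a b : Fin 3} (hab : a ≠ b) {x y : ℂ} (hx : x ∈ triangle)
    (hy : y ∈ triangle) (h : f a x = f b y) : x = p b ∧ y = p a := by
  have hxb := congrArg (baryCoord b) h
  have hya := congrArg (baryCoord a) h
  simp only [baryCoord_f, if_pos, if_neg hab, if_neg (Ne.symm hab)] at hxb hya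
  exact ⟨eq_p_of_one_le_baryCoord hx (by linarith [hy b]),
    eq_p_of_one_le_baryCoord hy (by linarith [hx a])⟩

lemma f_mem_of_mem {K : Set ℂ} (hK : IsSG K) (a : Fin 3) {x : ℂ} (hx : x ∈ K) : f a x ∈ K := by
  rw [hK.2.2]
  fin_cases a
  exacts [Or.inl (Or.inl ⟨x, hx, rfl⟩), Or.inl (Or.inr ⟨x, hx, rfl⟩), Or.inr ⟨x, hx, rfl⟩]

lemma exists_eq_f_of_mem {K : Set ℂ} (hK : IsSG K) {x : ℂ} (hx : x ∈ K) :
    ∃ a, ∃ y ∈ K, f a y = x := by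
  rw [hK.2.2] at hx
  rcases hx with (⟨y, hy, rfl⟩ | ⟨y, hy, rfl⟩) | ⟨y, hy, rfl⟩
  exacts [⟨0, y, hy, rfl⟩, ⟨1, y, hy, rfl⟩, ⟨2, y, hy, rfl⟩]

/- If `x = f a y` minimises `baryCoord k` on `K`, then
`baryCoord k x ≥ baryCoord k y / 2 ≥ baryCoord k x / 2`, so the minimum is nonnegative. -/
lemma subset_triangle {K : Set ℂ} (hK : IsSG K) : K ⊆ triangle := by
  intro z hz k
  have hcont : Continuous (baryCoord k) := by
    unfold baryCoord
    fin_cases k <;> dsimp <;> fun_prop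
  obtain ⟨x, hxK, hmin⟩ := hK.2.1.exists_isMinOn hK.1 hcont.continuousOn
  obtain ⟨a, y, hyK, rfl⟩ := exists_eq_f_of_mem hK hxK
  have hfy : baryCoord k y / 2 ≤ baryCoord k (f a y) := by
    rw [baryCoord_f]; split_ifs <;> linarith
  linarith [isMinOn_iff.mp hmin y hyK, isMinOn_iff.mp hmin z hz]

/- At a point `x` of `K` nearest to `p i`, `f i x ∈ K` is twice as close. -/
lemma p_mem {K : Set ℂ} (hK : IsSG K) (i : Fin 3) : p i ∈ K := by
  have hcont : Continuous fun z => dist z (p i) := by fun_prop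
  obtain ⟨x, hxK, hmin⟩ := hK.2.1.exists_isMinOn hK.1 hcont.continuousOn
  have hdist : dist (f i x) (p i) = dist x (p i) / 2 := by
    rw [Complex.dist_eq, Complex.dist_eq, f, show (x + p i) / 2 - p i = (x - p i) / 2 by ring,
      norm_div]
    norm_num
  have := isMinOn_iff.mp hmin _ (f_mem_of_mem hK i hxK)
  rw [hdist] at this
  have hx : dist x (p i) ≤ 0 := by linarith [dist_nonneg (x := x) (y := p i)]
  rwa [dist_le_zero.mp hx] at hxK

lemma fw_cons {n : ℕ} (a : Fin 3) (w : Fin n → Fin 3) : fw (Fin.cons a w) = f a ∘ fw w := by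
  simp only [fw, List.ofFn_succ, Fin.cons_zero, Fin.cons_succ]
  rfl

lemma cons_const {n : ℕ} (b : Fin 3) :
    (Fin.cons b (Function.const (Fin n) b) : Fin (n + 1) → Fin 3) = Function.const _ b := by
  ext k
  cases k using Fin.cases <;> rfl

lemma fw_mem_triangle {n : ℕ} (w : Fin n → Fin 3) {z : ℂ} (hz : z ∈ triangle) :
    fw w z ∈ triangle := by
  induction n with
  | zero => simpa [fw, fwl] using hz
  | succ n ih =>
    rw [← Fin.cons_self_tail w, fw_cons]
    exact f_mem_triangle _ (ih _)

lemma fw_const_p (n : ℕ) (b : Fin 3) : fw (Function.const (Fin n) b) (p b) = p b := by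
  induction n with
  | zero => rfl
  | succ n ih =>
    rw [← cons_const, fw_cons]
    exact (congrArg (f b) ih).trans (f_p_self b)

lemma eq_const_of_fw_eq_p {n : ℕ} {w : Fin n → Fin 3} {z : ℂ} (hz : z ∈ triangle) {b : Fin 3}
    (h : fw w z = p b) : w = Function.const _ b := by
  induction n with
  | zero => exact Subsingleton.elim _ _
  | succ n ih =>
    rw [← Fin.cons_self_tail w, fw_cons, Function.comp_apply, ← f_p_self b] at h
    have hw0 : w 0 = b := by
      by_contra hne
      exact hne (p_injective (eq_of_f_eq_f hne (fw_mem_triangle _ hz) (p_mem_triangle b) h).2).symm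
    rw [hw0] at h
    rw [← Fin.cons_self_tail w, hw0, ih (f_injective b h), cons_const]

lemma Kw_cons (K : Set ℂ) {n : ℕ} (a : Fin 3) (w : Fin n → Fin 3) :
    Kw K (Fin.cons a w) = f a '' Kw K w := by
  rw [Kw, Kw, fw_cons, Set.image_comp]

lemma inter_Kw_cons_nonempty_iff {n : ℕ} {K : Set ℂ} (a : Fin 3) (w v : Fin n → Fin 3) :
    (Kw K (Fin.cons a w) ∩ Kw K (Fin.cons a v)).Nonempty ↔ (Kw K w ∩ Kw K v).Nonempty := by
  rw [Kw_cons, Kw_cons, ← Set.image_inter (f_injective a), Set.image_nonempty]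

lemma Kw_subset_triangle {n : ℕ} {K : Set ℂ} (hK : IsSG K) (w : Fin n → Fin 3) :
    Kw K w ⊆ triangle := by
  rintro _ ⟨z, hz, rfl⟩
  exact fw_mem_triangle w (subset_triangle hK hz)

/- Distinct first letters: the two cells can only meet at the midpoint `f a (p b) = f b (p a)`. -/
lemma inter_Kw_cons_nonempty_iff_of_ne {K : Set ℂ} (hK : IsSG K) {n : ℕ} {a b : Fin 3}
    (hab : a ≠ b) (w v : Fin n → Fin 3) :
    (Kw K (Fin.cons a w) ∩ Kw K (Fin.cons b v)).Nonempty ↔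
      w = Function.const _ b ∧ v = Function.const _ a := by
  rw [Kw_cons, Kw_cons]
  constructor
  · rintro ⟨_, ⟨x, hx, rfl⟩, y, hy, hxy⟩
    obtain ⟨hxb, hya⟩ := eq_of_f_eq_f hab (Kw_subset_triangle hK w hx)
      (Kw_subset_triangle hK v hy) hxy.symm
    obtain ⟨x', hx', rfl⟩ := hx
    obtain ⟨y', hy', rfl⟩ := hy
    exact ⟨eq_const_of_fw_eq_p (subset_triangle hK hx') hxb,
      eq_const_of_fw_eq_p (subset_triangle hK hy') hya⟩
  · rintro ⟨rfl, rfl⟩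
    refine ⟨f a (p b), ⟨p b, ⟨p b, p_mem hK b, fw_const_p n b⟩, rfl⟩,
      ⟨p a, ⟨p a, p_mem hK a, fw_const_p n a⟩, ?_⟩⟩
    simp only [f]
    ring

lemma adj_cons_iff {K : Set ℂ} {n : ℕ} (a : Fin 3) (w v : Fin n → Fin 3) :
    Adj K (Fin.cons a w) (Fin.cons a v) ↔ Adj K w v := by
  simp only [Adj, inter_Kw_cons_nonempty_iff, ne_eq, Fin.cons_inj, true_and]

lemma adj_cons_iff_of_ne {K : Set ℂ} (hK : IsSG K) {n : ℕ} {a b : Fin 3} (hab : a ≠ b)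
    (w v : Fin n → Fin 3) :
    Adj K (Fin.cons a w) (Fin.cons b v) ↔ w = Function.const _ b ∧ v = Function.const _ a := by
  rw [Adj, inter_Kw_cons_nonempty_iff_of_ne hK hab]
  exact and_iff_right fun h => hab (by simpa using congrFun h 0)

open Matrix

theorem _root_.SimpleGraph.lapMatrix_mulVec_apply_eq_sum {V R : Type*} [Fintype V] [DecidableEq V]
    [Ring R] (G : SimpleGraph V) [DecidableRel G.Adj] (u : V → R) (v : V) :
    (G.lapMatrix R *ᵥ u) v = ∑ w, if G.Adj v w then u v - u w else 0 := by
  rw [G.lapMatrix_mulVec_apply, G.degree_eq_sum_if_adj, Finset.sum_mul,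
    SimpleGraph.neighborFinset_eq_filter, Finset.sum_filter, ← Finset.sum_sub_distrib]
  refine Finset.sum_congr rfl fun w _ => ?_
  split_ifs <;> simp

/-- Dirichlet principle. -/
theorem _root_.Matrix.PosSemidef.dotProduct_mulVec_le {ι : Type*} [Fintype ι] {A : Matrix ι ι ℝ}
    (hA : A.PosSemidef) {h u : ι → ℝ} (hu : ∀ i, u i ≠ h i → (A *ᵥ h) i = 0) :
    h ⬝ᵥ (A *ᵥ h) ≤ u ⬝ᵥ (A *ᵥ u) := by
  set d := u - h
  have hd : d ⬝ᵥ (A *ᵥ h) = 0 := Finset.sum_eq_zero fun i _ => by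
    by_cases hi : u i = h i
    · simp [d, hi]
    · simp [hu i hi]
  have hsymm : h ⬝ᵥ (A *ᵥ d) = d ⬝ᵥ (A *ᵥ h) := by
    rw [dotProduct_mulVec, ← mulVec_transpose, dotProduct_comm,
      ← conjTranspose_eq_transpose_of_trivial, hA.1.eq]
  have hnn : 0 ≤ d ⬝ᵥ (A *ᵥ d) := by simpa using hA.dotProduct_mulVec_nonneg d
  have hu' : u = h + d := by simp [d]
  rw [hu', mulVec_add, dotProduct_add, add_dotProduct, add_dotProduct, hsymm, hd]
  linarith

def cellGraph (K : Set ℂ) (n : ℕ) : SimpleGraph (Fin n → Fin 3) where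
  Adj := Adj K
  symm := ⟨fun _ _ h => ⟨h.1.symm, Set.inter_comm (Kw K _) _ ▸ h.2⟩⟩
  loopless := ⟨fun _ h => h.1 rfl⟩

abbrev lap (K : Set ℂ) (n : ℕ) : Matrix (Fin n → Fin 3) (Fin n → Fin 3) ℝ :=
  (cellGraph K n).lapMatrix ℝ

lemma En_eq_dotProduct (K : Set ℂ) {n : ℕ} (u : (Fin n → Fin 3) → ℝ) :
    En K u = u ⬝ᵥ (lap K n *ᵥ u) := by
  rw [← toLinearMap₂'_apply', SimpleGraph.lapMatrix_toLinearMap₂', En, one_div, inv_mul_eq_div]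
  rfl

lemma Rn_eq_inv_lap_mulVec (K : Set ℂ) {n : ℕ} {a b : Fin n → Fin 3}
    {h : (Fin n → Fin 3) → ℝ} (ha : h a = 1) (hb : h b = 0)
    (hharm : ∀ w, w ≠ a → w ≠ b → (lap K n *ᵥ h) w = 0) :
    Rn K a b = ((lap K n *ᵥ h) a)⁻¹ := by
  have hEh : En K h = (lap K n *ᵥ h) a := by
    rw [En_eq_dotProduct, dotProduct, Finset.sum_eq_single a, ha, one_mul]
    · intro w _ hwa
      by_cases hwb : w = b
      · rw [hwb, hb, zero_mul]
      · rw [hharm w hwa hwb, mul_zero]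
    · simp
  have hleast : IsLeast {e : ℝ | ∃ u : (Fin n → Fin 3) → ℝ, u a = 1 ∧ u b = 0 ∧ e = En K u}
      (En K h) := by
    refine ⟨⟨h, ha, hb, rfl⟩, ?_⟩
    rintro _ ⟨u, hua, hub, rfl⟩
    rw [En_eq_dotProduct, En_eq_dotProduct]
    refine ((cellGraph K n).posSemidef_lapMatrix ℝ).dotProduct_mulVec_le fun w hw => ?_
    exact hharm w (by rintro rfl; exact hw (hua.trans ha.symm))
      (by rintro rfl; exact hw (hub.trans hb.symm))
  rw [Rn, hleast.csInf_eq, hEh]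

lemma sum_fin_cons {α M : Type*} [Fintype α] [AddCommMonoid M] {n : ℕ}
    (g : (Fin (n + 1) → α) → M) : ∑ w, g w = ∑ b, ∑ v : Fin n → α, g (Fin.cons b v) := by
  rw [← (Fin.consEquiv fun _ => α).sum_comp, Fintype.sum_prod_type]
  rfl

/- `W_{n+1}` consists of three copies `a·W_n` of `W_n`, joined by the edges `a bⁿ ∼ b aⁿ`. -/
lemma lap_mulVec_cons {K : Set ℂ} (hK : IsSG K) {n : ℕ} (u : (Fin (n + 1) → Fin 3) → ℝ)
    (a : Fin 3) (w : Fin n → Fin 3) :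
    (lap K (n + 1) *ᵥ u) (Fin.cons a w) = (lap K n *ᵥ fun v => u (Fin.cons a v)) w +
      ∑ b ∈ Finset.univ.erase a, if w = Function.const _ b then
        u (Fin.cons a w) - u (Fin.cons b (Function.const _ a)) else 0 := by
  rw [SimpleGraph.lapMatrix_mulVec_apply_eq_sum, SimpleGraph.lapMatrix_mulVec_apply_eq_sum,
    sum_fin_cons, ← Finset.add_sum_erase _ _ (Finset.mem_univ a)]
  congr 1
  · exact Finset.sum_congr rfl fun v _ => if_congr (adj_cons_iff a w v) rfl rfl
  · refine Finset.sum_congr rfl fun b hb => ?_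
    have hab : a ≠ b := (Finset.ne_of_mem_erase hb).symm
    simp only [cellGraph, adj_cons_iff_of_ne hK hab]
    by_cases hw : w = Function.const _ b <;> simp [hw]

lemma lap_zero_mulVec (K : Set ℂ) (u : (Fin 0 → Fin 3) → ℝ) : lap K 0 *ᵥ u = 0 := by
  ext w
  rw [SimpleGraph.lapMatrix_mulVec_apply_eq_sum]
  exact Finset.sum_eq_zero fun v _ => if_neg fun h => h.1 (Subsingleton.elim _ _)

/-- Seen from its three corners, `W_{n+1}` is equivalent to a triangle network whose edges have
this conductance. -/
def conductance (n : ℕ) : ℝ := 2 / (3 * ((5 / 3) ^ (n + 1) - 1))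

lemma conductance_pos (n : ℕ) : 0 < conductance n := by
  have : (1 : ℝ) < (5 / 3) ^ (n + 1) := one_lt_pow₀ (by norm_num) (Nat.succ_ne_zero n)
  unfold conductance
  have : (0 : ℝ) < 3 * ((5 / 3) ^ (n + 1) - 1) := by linarith
  positivity

lemma conductance_zero : conductance 0 = 1 := by norm_num [conductance]

lemma conductance_succ (n : ℕ) :
    conductance (n + 1) = 3 * conductance n / (5 + 3 * conductance n) := by
  have : (1 : ℝ) < (5 / 3) ^ (n + 1) := one_lt_pow₀ (by norm_num) (Nat.succ_ne_zero n)
  have hr : (5 / 3 : ℝ) ^ (n + 1) - 1 ≠ 0 := by linarith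
  have hr' : (5 / 3 : ℝ) ^ (n + 1) * (5 / 3) - 1 ≠ 0 := by linarith
  unfold conductance
  rw [pow_succ]
  field_simp
  ring

/-- Corner values of the harmonic function with corner values `x` on the subcell `a·W_n`:
harmonicity at the junctions `a bⁿ`, `b aⁿ` is a linear system whose solution is this. -/
def cellData (c : ℝ) (x : Fin 3 → ℝ) (a : Fin 3) : Fin 3 → ℝ := fun j =>
  if j = a then x a else ((1 + 3 * c) * x a + x j + ∑ k, x k) / (5 + 3 * c)

lemma cellData_corner {c : ℝ} (hc : 0 ≤ c) (x : Fin 3 → ℝ) (a : Fin 3) :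
    c * (3 * cellData c x a a - ∑ k, cellData c x a k) =
      3 * c / (5 + 3 * c) * (3 * x a - ∑ k, x k) := by
  have : 5 + 3 * c ≠ 0 := by positivity
  fin_cases a <;> simp [cellData, Fin.sum_univ_three] <;> field_simp <;> ring

lemma cellData_junction {c : ℝ} (hc : 0 ≤ c) (x : Fin 3 → ℝ) {a b : Fin 3} (hab : a ≠ b) :
    c * (3 * cellData c x a b - ∑ k, cellData c x a k) + (cellData c x a b - cellData c x b a)
      = 0 := by
  have : 5 + 3 * c ≠ 0 := by positivity
  fin_cases a <;> fin_cases b <;> simp_all [cellData, Fin.sum_univ_three] <;> field_simp <;> ring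

def harmExt : (n : ℕ) → (Fin 3 → ℝ) → (Fin (n + 1) → Fin 3) → ℝ
  | 0, x, w => x (w 0)
  | n + 1, x, w => harmExt n (cellData (conductance n) x (w 0)) (Fin.tail w)

lemma harmExt_cons (n : ℕ) (x : Fin 3 → ℝ) (a : Fin 3) (w : Fin (n + 1) → Fin 3) :
    harmExt (n + 1) x (Fin.cons a w) = harmExt n (cellData (conductance n) x a) w := by
  rfl

lemma harmExt_const (n : ℕ) (x : Fin 3 → ℝ) (i : Fin 3) :
    harmExt n x (Function.const _ i) = x i := by
  induction n generalizing x with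
  | zero => rfl
  | succ n ih => rw [← cons_const, harmExt_cons, ih, cellData, if_pos rfl]

lemma lap_harmExt_const {K : Set ℂ} (hK : IsSG K) (n : ℕ) (x : Fin 3 → ℝ) (i : Fin 3) :
    (lap K (n + 1) *ᵥ harmExt n x) (Function.const _ i) = conductance n * (3 * x i - ∑ k, x k) := by
  induction n generalizing x with
  | zero =>
    have hconst : ∀ b, (Function.const (Fin 0) i = Function.const _ b ↔ True) :=
      fun _ => iff_true_intro (Subsingleton.elim _ _)
    rw [← cons_const, lap_mulVec_cons hK]
    simp only [lap_zero_mulVec, Pi.zero_apply, zero_add, hconst, if_true, harmExt, Fin.cons_zero,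
      conductance_zero, one_mul]
    rw [Finset.sum_erase_eq_sub (Finset.mem_univ i), Finset.sum_sub_distrib]
    simp
  | succ n ih =>
    have hne : ∀ b ∈ Finset.univ.erase i, Function.const (Fin (n + 1)) i ≠ Function.const _ b :=
      fun b hb h => Finset.ne_of_mem_erase hb (congrFun h 0).symm
    rw [← cons_const, lap_mulVec_cons hK, Finset.sum_eq_zero fun b hb => if_neg (hne b hb),
      add_zero, funext (harmExt_cons n x i), ih, cellData_corner (conductance_pos n).le,
      conductance_succ]

lemma lap_harmExt_of_ne_const {K : Set ℂ} (hK : IsSG K) (n : ℕ) (x : Fin 3 → ℝ)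
    {w : Fin (n + 1) → Fin 3} (hw : ∀ i, w ≠ Function.const _ i) :
    (lap K (n + 1) *ᵥ harmExt n x) w = 0 := by
  induction n generalizing x with
  | zero => exact absurd (funext fun k => by rw [Fin.fin_one_eq_zero k]; rfl) (hw (w 0))
  | succ n ih =>
    rw [← Fin.cons_self_tail w] at hw ⊢
    set a := w 0
    set v := Fin.tail w
    rw [lap_mulVec_cons hK, funext (harmExt_cons n x a)]
    by_cases hv : ∃ b, v = Function.const _ b
    · obtain ⟨b, hvb⟩ := hv
      have hab : a ≠ b := fun h => hw a (by rw [hvb, ← h, cons_const])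
      rw [Finset.sum_eq_single_of_mem b (Finset.mem_erase.mpr ⟨hab.symm, Finset.mem_univ b⟩)
        fun c _ hcb => if_neg fun h => hcb (congrFun (h.symm.trans hvb) 0)]
      rw [if_pos hvb, hvb, lap_harmExt_const hK, harmExt_cons, harmExt_cons, harmExt_const,
        harmExt_const]
      exact cellData_junction (conductance_pos n).le x hab
    · push Not at hv
      rw [ih _ hv, zero_add]
      exact Finset.sum_eq_zero fun b _ => if_neg (hv b)

/- The boundary value `1/2` at the third corner makes the current vanish there. -/
lemma Rn_const {K : Set ℂ} (hK : IsSG K) (n : ℕ) {i j : Fin 3} (hij : i ≠ j) :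
    Rn K (Function.const (Fin (n + 1)) i) (Function.const _ j) = (5 / 3) ^ (n + 1) - 1 := by
  set x : Fin 3 → ℝ := fun t => if t = i then 1 else if t = j then 0 else 1 / 2
  have hsum : ∑ k, x k = 3 / 2 := by
    fin_cases i <;> fin_cases j <;> simp_all [x, Fin.sum_univ_three] <;> norm_num
  have hxi : x i = 1 := if_pos rfl
  have hxj : x j = 0 := by simp [x, hij.symm]
  rw [Rn_eq_inv_lap_mulVec K (h := harmExt n x) (by rw [harmExt_const, hxi])
    (by rw [harmExt_const, hxj]), lap_harmExt_const hK, hxi, hsum]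
  · rw [conductance]; field_simp; ring
  · intro w hwi hwj
    by_cases hw : ∃ t, w = Function.const _ t
    · obtain ⟨t, rfl⟩ := hw
      have hti : t ≠ i := fun h => hwi (by rw [h])
      have htj : t ≠ j := fun h => hwj (by rw [h])
      have hxt : x t = 1 / 2 := by simp [x, hti, htj]
      rw [lap_harmExt_const hK, hsum, hxt]
      ring
    · push Not at hw
      exact lap_harmExt_of_ne_const hK n x hw

theorem statement3 (K : Set ℂ) (hK : IsSG K) (n : ℕ) (hn : 1 ≤ n) :
    Rn K (fun _ : Fin n => (0 : Fin 3)) (fun _ => 1) = (5/3)^n - 1 ∧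
    Rn K (fun _ : Fin n => (1 : Fin 3)) (fun _ => 2) = (5/3)^n - 1 ∧
    Rn K (fun _ : Fin n => (0 : Fin 3)) (fun _ => 2) = (5/3)^n - 1 := by
  obtain ⟨m, rfl⟩ : ∃ m, n = m + 1 := ⟨n - 1, by omega⟩
  exact ⟨Rn_const hK m (by decide), Rn_const hK m (by decide), Rn_const hK m (by decide)⟩

end SG
end
end

section
/- Let (x_n)_{n≥1} be a sequence of nonnegative real numbers. Then, with all quantities taken in [0,∞]: liminf_{n→∞} x_n ≤ liminf_{λ→1⁻} (1−λ)·Σ_{n=1}^∞ λⁿ x_n ≤ limsup_{λ→1⁻} (1−λ)·Σ_{n=1}^∞ λⁿ x_n ≤ limsup_{n→∞} x_n ≤ sup_{n≥1} x_n. -/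
open Filter Topology
open scoped ENNReal

/-!
Write `A(r) = (1 - r) ∑ rⁿ⁺¹ yₙ` for the Abel mean, computed in `[0, ∞]`. Since
`(1 - r) ∑_{n ≥ N} rⁿ⁺¹ = r^(N+1)`, a bound `b ≤ yₙ` (resp. `yₙ ≤ b`) for `n ≥ N` gives
`r^(N+1) b ≤ A(r)` (resp. `A(r) ≤ (1 - r) ∑_{n < N} yₙ + b`), and both bounds tend to `b`
as `r → 1⁻`, the second because the finite head sum is killed by `1 - r`. Letting `b` approach `liminf y` (resp. `limsup y`) gives the two outer inequalities.
-/

noncomputable def abelMean (y : ℕ → ℝ≥0∞) (r : ℝ≥0∞) : ℝ≥0∞ :=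
  (1 - r) * ∑' n, r ^ (n + 1) * y n

lemma one_sub_mul_tsum_pow_mul {r : ℝ≥0∞} (hr : r < 1) (N : ℕ) (c : ℝ≥0∞) :
    (1 - r) * ∑' n, r ^ (n + N + 1) * c = r ^ (N + 1) * c := by
  have hsplit : ∀ n : ℕ, r ^ (n + N + 1) * c = r ^ n * (r ^ (N + 1) * c) := fun n => by ring
  simp only [hsplit]
  rw [ENNReal.tsum_mul_right, ENNReal.tsum_geometric, ← mul_assoc, ← mul_assoc,
    ENNReal.mul_inv_cancel (tsub_pos_of_lt hr).ne' (tsub_le_self.trans_lt ENNReal.one_lt_top).ne,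
    one_mul]

lemma abelMean_eq_sum_add_tail (y : ℕ → ℝ≥0∞) (r : ℝ≥0∞) (N : ℕ) :
    abelMean y r = (1 - r) * ∑ i ∈ Finset.range N, r ^ (i + 1) * y i
      + (1 - r) * ∑' n, r ^ (n + N + 1) * y (n + N) := by
  rw [abelMean, ← ENNReal.summable.sum_add_tsum_nat_add' (k := N), mul_add]

lemma pow_mul_le_abelMean {y : ℕ → ℝ≥0∞} {r b : ℝ≥0∞} {N : ℕ} (hr : r < 1)
    (hb : ∀ n ≥ N, b ≤ y n) : r ^ (N + 1) * b ≤ abelMean y r := by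
  rw [abelMean_eq_sum_add_tail y r N, ← one_sub_mul_tsum_pow_mul hr N b]
  refine le_add_left ?_
  gcongr with n
  exact hb _ (Nat.le_add_left N n)

lemma abelMean_le_sum_add {y : ℕ → ℝ≥0∞} {r b : ℝ≥0∞} {N : ℕ} (hr : r < 1)
    (hb : ∀ n ≥ N, y n ≤ b) : abelMean y r ≤ (1 - r) * ∑ i ∈ Finset.range N, y i + b := by
  have hpow : ∀ k : ℕ, r ^ k ≤ 1 := fun k => pow_le_one' hr.le k
  rw [abelMean_eq_sum_add_tail y r N]
  gcongr
  · exact mul_le_of_le_one_left' (hpow _)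
  · calc (1 - r) * ∑' n, r ^ (n + N + 1) * y (n + N)
        ≤ (1 - r) * ∑' n, r ^ (n + N + 1) * b := by
          gcongr with n
          exact hb _ (Nat.le_add_left N n)
      _ = r ^ (N + 1) * b := one_sub_mul_tsum_pow_mul hr N b
      _ ≤ b := mul_le_of_le_one_left' (hpow _)

section AbelLimit

variable {α : Type*} {l : Filter α} {r : α → ℝ≥0∞}

lemma liminf_le_liminf_abelMean [l.NeBot] (y : ℕ → ℝ≥0∞) (hr : Tendsto r l (𝓝 1))
    (hr1 : ∀ᶠ t in l, r t < 1) :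
    liminf y atTop ≤ liminf (fun t => abelMean y (r t)) l := by
  refine le_of_forall_lt_imp_le_of_dense fun b hb => ?_
  obtain ⟨N, hN⟩ := eventually_atTop.1 (eventually_lt_of_lt_liminf hb)
  have hlim : Tendsto (fun t => r t ^ (N + 1) * b) l (𝓝 b) := by
    simpa using ENNReal.Tendsto.mul_const (ENNReal.Tendsto.pow (n := N + 1) hr)
      (Or.inl (by simp))
  calc b = liminf (fun t => r t ^ (N + 1) * b) l := hlim.liminf_eq.symm
    _ ≤ liminf (fun t => abelMean y (r t)) l :=
      liminf_le_liminf (hr1.mono fun t ht => pow_mul_le_abelMean ht fun n hn => (hN n hn).le)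

lemma limsup_abelMean_le_limsup [l.NeBot] {y : ℕ → ℝ≥0∞} (hy : ∀ n, y n ≠ ∞)
    (hr : Tendsto r l (𝓝 1)) (hr1 : ∀ᶠ t in l, r t < 1) :
    limsup (fun t => abelMean y (r t)) l ≤ limsup y atTop := by
  refine le_of_forall_gt_imp_ge_of_dense fun b hb => ?_
  obtain ⟨N, hN⟩ := eventually_atTop.1 (eventually_lt_of_limsup_lt hb)
  have hhead : ∑ i ∈ Finset.range N, y i ≠ ∞ := ENNReal.sum_ne_top.2 fun i _ => hy i
  have hlim : Tendsto (fun t => (1 - r t) * ∑ i ∈ Finset.range N, y i + b) l (𝓝 b) := by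
    have hgap : Tendsto (fun t => 1 - r t) l (𝓝 0) := by
      simpa using ENNReal.Tendsto.sub tendsto_const_nhds hr (Or.inl ENNReal.one_ne_top)
    simpa using (ENNReal.Tendsto.mul_const hgap (Or.inr hhead)).add_const b
  calc limsup (fun t => abelMean y (r t)) l
      ≤ limsup (fun t => (1 - r t) * ∑ i ∈ Finset.range N, y i + b) l :=
        limsup_le_limsup (hr1.mono fun t ht => abelMean_le_sum_add ht fun n hn => (hN n hn).le)
    _ = b := hlim.limsup_eq

end AbelLimit
lemma ofReal_one_sub_mul_tsum_eq_abelMean (x : ℕ → ℝ) {lam : ℝ} (hlam : 0 ≤ lam) :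
    ENNReal.ofReal (1 - lam) * ∑' n, ENNReal.ofReal (lam ^ (n + 1) * x n)
      = abelMean (fun n => ENNReal.ofReal (x n)) (ENNReal.ofReal lam) := by
  simp only [abelMean, ENNReal.ofReal_sub 1 hlam, ENNReal.ofReal_one,
    ENNReal.ofReal_mul (pow_nonneg hlam _), ENNReal.ofReal_pow hlam]

theorem statement16_general (x : ℕ → ℝ) :
    liminf (fun n : ℕ => ENNReal.ofReal (x (n+1))) atTop ≤
      liminf (fun lam : ℝ =>
        ENNReal.ofReal (1 - lam) * ∑' n : ℕ, ENNReal.ofReal (lam ^ (n+1) * x (n+1)))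
        (nhdsWithin 1 (Set.Iio 1)) ∧
    liminf (fun lam : ℝ =>
        ENNReal.ofReal (1 - lam) * ∑' n : ℕ, ENNReal.ofReal (lam ^ (n+1) * x (n+1)))
        (nhdsWithin 1 (Set.Iio 1)) ≤
      limsup (fun lam : ℝ =>
        ENNReal.ofReal (1 - lam) * ∑' n : ℕ, ENNReal.ofReal (lam ^ (n+1) * x (n+1)))
        (nhdsWithin 1 (Set.Iio 1)) ∧
    limsup (fun lam : ℝ =>
        ENNReal.ofReal (1 - lam) * ∑' n : ℕ, ENNReal.ofReal (lam ^ (n+1) * x (n+1)))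
        (nhdsWithin 1 (Set.Iio 1)) ≤
      limsup (fun n : ℕ => ENNReal.ofReal (x (n+1))) atTop ∧
    limsup (fun n : ℕ => ENNReal.ofReal (x (n+1))) atTop ≤
      ⨆ n : ℕ, ENNReal.ofReal (x (n+1)) := by
  have hmean : (fun lam : ℝ =>
      ENNReal.ofReal (1 - lam) * ∑' n : ℕ, ENNReal.ofReal (lam ^ (n+1) * x (n+1)))
      =ᶠ[𝓝[<] 1] fun lam => abelMean (fun n => ENNReal.ofReal (x (n+1))) (ENNReal.ofReal lam) := by
    filter_upwards [Ioo_mem_nhdsLT zero_lt_one] with lam hlam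
    exact ofReal_one_sub_mul_tsum_eq_abelMean (fun n => x (n+1)) hlam.1.le
  have hr : Tendsto ENNReal.ofReal (𝓝[<] (1 : ℝ)) (𝓝 1) := by
    simpa using (ENNReal.continuous_ofReal.tendsto 1).mono_left nhdsWithin_le_nhds
  have hr1 : ∀ᶠ lam in 𝓝[<] (1 : ℝ), ENNReal.ofReal lam < 1 :=
    eventually_nhdsWithin_of_forall fun _ hlam => ENNReal.ofReal_lt_one.2 hlam
  refine ⟨?_, liminf_le_limsup, ?_, limsup_le_iSup⟩
  · rw [liminf_congr hmean]
    exact liminf_le_liminf_abelMean _ hr hr1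
  · rw [limsup_congr hmean]
    exact limsup_abelMean_le_limsup (fun _ => ENNReal.ofReal_ne_top) hr hr1

/-- For a sequence `(x_n)_{n≥1}` of nonnegative reals (here `x (n+1)` plays the role
of the `n`-th term, `n ≥ 1`), with all quantities in `[0,∞]`:
`liminf_n x_n ≤ liminf_{λ→1⁻} (1−λ) Σ_{n≥1} λⁿ x_n
 ≤ limsup_{λ→1⁻} (1−λ) Σ_{n≥1} λⁿ x_n ≤ limsup_n x_n ≤ sup_{n≥1} x_n`. -/
theorem statement16 (x : ℕ → ℝ) (hx : ∀ n, 0 ≤ x n) :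
    liminf (fun n : ℕ => ENNReal.ofReal (x (n+1))) atTop ≤
      liminf (fun lam : ℝ =>
        ENNReal.ofReal (1 - lam) * ∑' n : ℕ, ENNReal.ofReal (lam ^ (n+1) * x (n+1)))
        (nhdsWithin 1 (Set.Iio 1)) ∧
    liminf (fun lam : ℝ =>
        ENNReal.ofReal (1 - lam) * ∑' n : ℕ, ENNReal.ofReal (lam ^ (n+1) * x (n+1)))
        (nhdsWithin 1 (Set.Iio 1)) ≤
      limsup (fun lam : ℝ =>
        ENNReal.ofReal (1 - lam) * ∑' n : ℕ, ENNReal.ofReal (lam ^ (n+1) * x (n+1)))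
        (nhdsWithin 1 (Set.Iio 1)) ∧
    limsup (fun lam : ℝ =>
        ENNReal.ofReal (1 - lam) * ∑' n : ℕ, ENNReal.ofReal (lam ^ (n+1) * x (n+1)))
        (nhdsWithin 1 (Set.Iio 1)) ≤
      limsup (fun n : ℕ => ENNReal.ofReal (x (n+1))) atTop ∧
    limsup (fun n : ℕ => ENNReal.ofReal (x (n+1))) atTop ≤
      ⨆ n : ℕ, ENNReal.ofReal (x (n+1)) :=
  statement16_general x
end
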